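/- In Matsumoto's presentation of K_2(F), the symbol is antisymmetric: {a, b}·{b, a} = 1 for all a, b ∈ F*. -/

import Mathlib

open TensorProduct

/-- The Steinberg subgroup of `F* ⊗ F*`: generated by the elements `y ⊗ (1-y)`,
`y ≠ 0, 1`. The quotient is `K₂(F)` by Matsumoto's theorem. -/
noncomputable def steinbergSubgroup (F : Type*) [Field F] :
    AddSubgroup (Additive Fˣ ⊗[ℤ] Additive Fˣ) :=
  AddSubgroup.closure
    {t | ∃ (y : F) (hy : y ≠ 0) (hy1 : 1 - y ≠ 0),
      t = Additive.ofMul (Units.mk0 y hy) ⊗ₜ[ℤ] Additive.ofMul (Units.mk0 (1 - y) hy1)}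

/-! The Steinberg relation `{a, -a} = 1` follows from `-a = (1 - a) / (1 - a⁻¹)` and
`{a, 1 - a⁻¹} = {a⁻¹, 1 - a⁻¹}⁻¹ = 1`; antisymmetry is then the bilinear expansion
`{ab, -ab} = {a, -a} {a, b} {b, a} {b, -b}`. -/

section

variable {F : Type*} [Field F]

lemma ofMul_tmul_ofMul_mem_steinbergSubgroup {u v : Fˣ} (h : (u : F) + v = 1) :
    Additive.ofMul u ⊗ₜ[ℤ] Additive.ofMul v ∈ steinbergSubgroup F := by
  have hv : (v : F) = 1 - u := eq_sub_of_add_eq' h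
  refine AddSubgroup.subset_closure ⟨u, u.ne_zero, hv ▸ v.ne_zero, ?_⟩
  congr <;> ext <;> simp [hv]

lemma ofMul_tmul_ofMul_neg_mem_steinbergSubgroup (a : Fˣ) :
    Additive.ofMul a ⊗ₜ[ℤ] Additive.ofMul (-a) ∈ steinbergSubgroup F := by
  rcases eq_or_ne a 1 with rfl | ha
  · simp
  have ha' : (a : F) ≠ 1 := mt Units.val_eq_one.1 ha
  have h₁ : (1 : F) - a ≠ 0 := sub_ne_zero.2 ha'.symm
  have h₂ : (1 : F) - a⁻¹ ≠ 0 := sub_ne_zero.2 (by simpa [eq_comm] using ha')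
  set v := Units.mk0 _ h₁
  set w := Units.mk0 _ h₂
  have hneg : -a = v * w⁻¹ := Units.ext <| by
    simp only [Units.val_neg, Units.val_mul, Units.val_inv_eq_inv_val, Units.val_mk0, v, w]
    field_simp
    ring
  have hsplit : Additive.ofMul a ⊗ₜ[ℤ] Additive.ofMul (-a) =
      Additive.ofMul a ⊗ₜ[ℤ] Additive.ofMul v + Additive.ofMul a⁻¹ ⊗ₜ[ℤ] Additive.ofMul w := by
    rw [hneg, ofMul_mul, ofMul_inv, ofMul_inv, tmul_add, tmul_neg, neg_tmul]
  rw [hsplit]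
  exact add_mem (ofMul_tmul_ofMul_mem_steinbergSubgroup (by simp [v]))
    (ofMul_tmul_ofMul_mem_steinbergSubgroup (by simp [w]))

end

/-- Antisymmetry of the symbol in Matsumoto's presentation of `K₂(F)`:
`{a,b}·{b,a} = 1`, i.e. the class of `a ⊗ b + b ⊗ a` vanishes. -/
theorem K2_symbol_antisymm (F : Type*) [Field F] (a b : Fˣ) :
    (QuotientAddGroup.mk
        (Additive.ofMul a ⊗ₜ[ℤ] Additive.ofMul b +
          Additive.ofMul b ⊗ₜ[ℤ] Additive.ofMul a) :
      (Additive Fˣ ⊗[ℤ] Additive Fˣ) ⧸ steinbergSubgroup F) = 0 := by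
  have expand :
      Additive.ofMul a ⊗ₜ[ℤ] Additive.ofMul b + Additive.ofMul b ⊗ₜ[ℤ] Additive.ofMul a =
      Additive.ofMul (a * b) ⊗ₜ[ℤ] Additive.ofMul (-(a * b)) -
        Additive.ofMul a ⊗ₜ[ℤ] Additive.ofMul (-a) - Additive.ofMul b ⊗ₜ[ℤ] Additive.ofMul (-b) := by
    rw [← neg_one_mul (a * b), ← neg_one_mul a, ← neg_one_mul b]
    simp only [ofMul_mul, add_tmul, tmul_add]
    abel
  rw [QuotientAddGroup.eq_zero_iff, expand]
  exact sub_mem (sub_mem (ofMul_tmul_ofMul_neg_mem_steinbergSubgroup _)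
    (ofMul_tmul_ofMul_neg_mem_steinbergSubgroup a)) (ofMul_tmul_ofMul_neg_mem_steinbergSubgroup b)
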